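/- Let E be a Hilbert C*-module over a finite dimensional C*-algebra A and K ∈ K(E). (1) If E is not finitely generated, then 0 ∈ σ(K), the spectrum of K in L(E). (2) Every nonzero λ ∈ σ(K) is an eigenvalue of K, i.e., Ker(λI − K) ≠ {0}. -/

import Mathlib

/-!
Over a finite-dimensional `A` every rank-one operator `z ↦ x <• ⟪y, z⟫` has finite-dimensional
range, so every `K ∈ K(E)` is a compact operator on the Banach space `E` and the Fredholm
alternative applies. If `λ ≠ 0` is not an eigenvalue, `λ - K` is bijective. Its adjoint
`star λ - K*` has the same form, because `K*` is again in `K(E)` as the limit of the adjoints of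
finite-rank approximants of `K`; it is injective since `λ - K` is onto, hence bijective too, and
the two inverses are adjoint to each other, so `λ - K` is invertible in `L(E)`.

If `K` itself is invertible in `L(E)`, then `1 = K⁻¹ K ∈ K(E)`. An operator in the span of the
rank-one operators close enough to `1` is invertible, in particular onto, and its range lies in
the span of `x <• A` for finitely many `x`, so `E` is finitely generated.
-/

open scoped RightActions

/-- Mathlib's `CStarModule` of December 2024 (right `A`-action through `Aᵐᵒᵖ`); the current
Mathlib class of that name uses a left action `SMul A E` instead. -/
class CStarModule' (A E : Type*) [NonUnitalSemiring A] [StarRing A] [Module ℂ A]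
    [AddCommGroup E] [Module ℂ E] [PartialOrder A] [SMul Aᵐᵒᵖ E] [Norm A] [Norm E]
    extends Inner A E where
  inner_add_right {x} {y} {z} : inner x (y + z) = inner x y + inner x z
  inner_self_nonneg {x} : 0 ≤ inner x x
  inner_self {x} : inner x x = 0 ↔ x = 0
  inner_op_smul_right {a : A} {x y : E} : inner x (y <• a) = inner x y * a
  inner_smul_right_complex {z : ℂ} {x} {y} : inner x (z • y) = z • inner x y
  star_inner x y : star (inner x y) = inner y x
  norm_eq_sqrt_norm_inner_self x : ‖x‖ = √‖inner x x‖

section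

variable {A : Type*} [CStarAlgebra A] [PartialOrder A] [StarOrderedRing A]
variable {E : Type*} [NormedAddCommGroup E] [NormedSpace ℂ E] [SMul Aᵐᵒᵖ E]
  [CStarModule' A E] [CompleteSpace E]

local notation "⟪" x ", " y "⟫" => inner (𝕜 := A) x y

/-- `T` is a bounded adjointable `A`-linear operator with adjoint `T'`. -/
def IsAdjointableWith (T T' : E →L[ℂ] E) : Prop :=
  (∀ (a : A) (x : E), T (x <• a) = T x <• a) ∧
  ∀ x y : E, ⟪T x, y⟫ = ⟪x, T' y⟫

/-- The orthogonal complement of a subset of a Hilbert C*-module. -/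
def ortho (W : Set E) : Set E := {y | ∀ x ∈ W, ⟪x, y⟫ = (0 : A)}

/-- `W` is orthogonally complemented in `E`. -/
def OrthoComplemented (W : Set E) : Prop :=
  ∀ z : E, ∃ x ∈ W, ∃ y ∈ ortho (A := A) W, z = x + y

/-- `W` is a closed `A`-submodule of `E`. -/
def IsClosedSubmodule (W : Submodule ℂ E) : Prop :=
  IsClosed (W : Set E) ∧ ∀ (a : A), ∀ x ∈ W, x <• a ∈ W

/-- An orthogonal projection in `L(E)`: an `A`-linear, idempotent, self-adjoint operator. -/
def IsOrthoProjection (P : E →L[ℂ] E) : Prop :=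
  (∀ (a : A) (x : E), P (x <• a) = P x <• a) ∧ P.comp P = P ∧
  ∀ x y : E, ⟪P x, y⟫ = ⟪x, P y⟫

/-- A "compact" operator on a Hilbert C*-module: a member of the closure of the span
of the rank-one operators `z ↦ x ⟨y, z⟩`. -/
def IsCompactOp (K : E →L[ℂ] E) : Prop :=
  K ∈ closure (Submodule.span ℂ
    {S : E →L[ℂ] E | ∃ x y : E, ∀ z : E, S z = x <• ⟪y, z⟫} : Set (E →L[ℂ] E))

/-- `E` is a finitely generated Hilbert `A`-module. -/
def IsFinGen : Prop :=
  ∃ (n : ℕ) (g : Fin n → E), ∀ x : E,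
    x ∈ Submodule.span ℂ {y : E | ∃ (i : Fin n) (a : A), y = g i <• a}

/-- `T` is invertible in `L(E)`, the bounded adjointable operators. -/
def InvertibleInL (T : E →L[ℂ] E) : Prop :=
  ∃ S S' : E →L[ℂ] E, IsAdjointableWith (A := A) S S' ∧ S.comp T = 1 ∧ T.comp S = 1

end

namespace CStarModule'

open MulOpposite

variable {A : Type*} [CStarAlgebra A] [PartialOrder A]
variable {E : Type*} [NormedAddCommGroup E] [NormedSpace ℂ E] [SMul Aᵐᵒᵖ E] [CStarModule' A E]

local notation "⟪" x ", " y "⟫" => inner (𝕜 := A) x y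

/- A right Hilbert `A`-module is a left Hilbert `Aᵐᵒᵖ`-module. This gives access to Mathlib's
`CStarModule` API, in particular to the Cauchy–Schwarz inequality. -/
noncomputable instance toCStarModuleMulOpposite : CStarModule Aᵐᵒᵖ E where
  inner x y := op ⟪x, y⟫
  inner_add_right := congrArg op inner_add_right
  inner_self_nonneg := op_nonneg.2 inner_self_nonneg
  inner_self := op_eq_zero_iff _ |>.trans inner_self
  inner_op_smul_right {a x y} := by
    rw [← op_unop a]
    exact congrArg op inner_op_smul_right
  inner_smul_right_complex := congrArg op inner_smul_right_complex
  star_inner x y := congrArg op (star_inner x y)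
  norm_eq_sqrt_norm_inner_self x := by
    rw [norm_op]
    exact norm_eq_sqrt_norm_inner_self x

lemma inner_add_left {x y z : E} : ⟪x + y, z⟫ = ⟪x, z⟫ + ⟪y, z⟫ :=
  op_injective (CStarModule.inner_add_left (A := Aᵐᵒᵖ) (x := x) (y := y) (z := z))

lemma inner_sub_left {x y z : E} : ⟪x - y, z⟫ = ⟪x, z⟫ - ⟪y, z⟫ :=
  op_injective (CStarModule.inner_sub_left (A := Aᵐᵒᵖ) (x := x) (y := y) (z := z))

lemma inner_sub_right {x y z : E} : ⟪x, y - z⟫ = ⟪x, y⟫ - ⟪x, z⟫ :=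
  op_injective (CStarModule.inner_sub_right (A := Aᵐᵒᵖ) (x := x) (y := y) (z := z))

lemma inner_smul_left_complex {c : ℂ} {x y : E} : ⟪c • x, y⟫ = star c • ⟪x, y⟫ :=
  op_injective (CStarModule.inner_smul_left_complex (A := Aᵐᵒᵖ) (z := c) (x := x) (y := y))

lemma inner_zero_left {x : E} : ⟪0, x⟫ = 0 :=
  op_injective (CStarModule.inner_zero_left (A := Aᵐᵒᵖ) (x := x))

lemma inner_zero_right {x : E} : ⟪x, 0⟫ = 0 :=
  op_injective (CStarModule.inner_zero_right (A := Aᵐᵒᵖ) (x := x))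

lemma inner_op_smul_left {a : A} {x y : E} : ⟪x <• a, y⟫ = star a * ⟪x, y⟫ := by
  rw [← star_inner, inner_op_smul_right, star_mul, star_inner]

variable (A) in
lemma ext_inner_left {x y : E} (h : ∀ z : E, ⟪z, x⟫ = ⟪z, y⟫) : x = y := by
  rw [← sub_eq_zero, ← inner_self (A := A), inner_sub_right, h, sub_self]

def rightSMulₗ (x : E) : A →ₗ[ℂ] E where
  toFun a := x <• a
  map_add' a b := ext_inner_left A fun z => by
    simp only [inner_op_smul_right, inner_add_right, mul_add]
  map_smul' c a := ext_inner_left A fun z => by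
    simp only [inner_op_smul_right, inner_smul_right_complex, mul_smul_comm, RingHom.id_apply]

lemma norm_sq_eq {x : E} : ‖x‖ ^ 2 = ‖⟪x, x⟫‖ :=
  CStarModule.norm_sq_eq Aᵐᵒᵖ (x := x)

lemma norm_op_smul_le (x : E) (a : A) : ‖x <• a‖ ≤ ‖x‖ * ‖a‖ := by
  rw [← sq_le_sq₀ (norm_nonneg _) (by positivity), norm_sq_eq (A := A), inner_op_smul_right,
    inner_op_smul_left, mul_pow, norm_sq_eq (A := A)]
  calc ‖star a * ⟪x, x⟫ * a‖ ≤ ‖star a‖ * ‖⟪x, x⟫‖ * ‖a‖ := norm_mul₃_le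
    _ = ‖⟪x, x⟫‖ * ‖a‖ ^ 2 := by rw [norm_star]; ring

variable [StarOrderedRing A]

lemma norm_inner_le {x y : E} : ‖⟪x, y⟫‖ ≤ ‖x‖ * ‖y‖ :=
  CStarModule.norm_inner_le (A := Aᵐᵒᵖ) E

lemma continuous_inner : Continuous fun p : E × E => ⟪p.1, p.2⟫ :=
  continuous_unop.comp (CStarModule.continuous_inner (A := Aᵐᵒᵖ))

variable (A) in
noncomputable def rankOne (x y : E) : E →L[ℂ] E :=
  LinearMap.mkContinuous
    { toFun z := x <• ⟪y, z⟫
      map_add' z w := by rw [inner_add_right]; exact (rightSMulₗ x).map_add _ _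
      map_smul' c z := by rw [inner_smul_right_complex]; exact (rightSMulₗ x).map_smul _ _ }
    (‖x‖ * ‖y‖) fun z => calc
      ‖x <• ⟪y, z⟫‖ ≤ ‖x‖ * (‖y‖ * ‖z‖) :=
        (norm_op_smul_le x _).trans (by gcongr; exact norm_inner_le)
      _ = ‖x‖ * ‖y‖ * ‖z‖ := by ring

lemma rankOne_apply (x y z : E) : rankOne A x y z = x <• ⟪y, z⟫ := rfl

end CStarModule'

section Adjointable

open CStarModule'

variable {A : Type*} [CStarAlgebra A] [PartialOrder A]
variable {E : Type*} [NormedAddCommGroup E] [NormedSpace ℂ E] [SMul Aᵐᵒᵖ E] [CStarModule' A E]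

local notation "⟪" x ", " y "⟫" => inner (𝕜 := A) x y

lemma isAdjointableWith_of_inner {T T' : E →L[ℂ] E} (h : ∀ x y : E, ⟪T x, y⟫ = ⟪x, T' y⟫) :
    IsAdjointableWith (A := A) T T' := by
  refine ⟨fun a x => ext_inner_left A fun z => ?_, h⟩
  rw [← star_inner, h, star_inner, inner_op_smul_right, inner_op_smul_right, ← star_inner, ← h,
    star_inner]

namespace IsAdjointableWith

variable {T T' S S' : E →L[ℂ] E}

lemma symm (h : IsAdjointableWith (A := A) T T') : IsAdjointableWith (A := A) T' T :=
  isAdjointableWith_of_inner fun x y => by rw [← star_inner, ← h.2, star_inner]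

lemma add (hT : IsAdjointableWith (A := A) T T') (hS : IsAdjointableWith (A := A) S S') :
    IsAdjointableWith (A := A) (T + S) (T' + S') :=
  isAdjointableWith_of_inner fun x y => by
    simp only [add_apply, CStarModule'.inner_add_left, CStarModule'.inner_add_right, hT.2, hS.2]

lemma sub (hT : IsAdjointableWith (A := A) T T') (hS : IsAdjointableWith (A := A) S S') :
    IsAdjointableWith (A := A) (T - S) (T' - S') :=
  isAdjointableWith_of_inner fun x y => by
    simp only [sub_apply, CStarModule'.inner_sub_left, CStarModule'.inner_sub_right, hT.2, hS.2]

lemma smul (h : IsAdjointableWith (A := A) T T') (c : ℂ) :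
    IsAdjointableWith (A := A) (c • T) (star c • T') :=
  isAdjointableWith_of_inner fun x y => by
    simp only [smul_apply, inner_smul_left_complex, inner_smul_right_complex, h.2]

lemma smul_one_sub (h : IsAdjointableWith (A := A) T T') (c : ℂ) :
    IsAdjointableWith (A := A) (c • 1 - T) (star c • 1 - T') :=
  ((isAdjointableWith_of_inner fun _ _ => rfl).smul c).sub h

lemma injective_of_surjective (h : IsAdjointableWith (A := A) T T')
    (hT : Function.Surjective T) : Function.Injective T' := by
  refine (injective_iff_map_eq_zero T').2 fun y hy => ?_
  obtain ⟨x, rfl⟩ := hT y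
  rw [← inner_self (A := A), h.2, hy, CStarModule'.inner_zero_right]

lemma invertibleInL (h : IsAdjointableWith (A := A) T T') (hT : IsUnit T) (hT' : IsUnit T') :
    InvertibleInL (A := A) T := by
  obtain ⟨u, rfl⟩ := hT
  obtain ⟨v, rfl⟩ := hT'
  have apply_inv (w : (E →L[ℂ] E)ˣ) (x : E) : (w : E →L[ℂ] E) ((↑w⁻¹ : E →L[ℂ] E) x) = x := by
    rw [← mul_apply_eq_comp, w.mul_inv, one_apply_eq_self]
  refine ⟨↑u⁻¹, ↑v⁻¹, isAdjointableWith_of_inner fun x y => ?_, u.inv_mul, u.mul_inv⟩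
  rw [← apply_inv v y, ← h.2, apply_inv, apply_inv]

variable [StarOrderedRing A]

lemma norm_le (h : IsAdjointableWith (A := A) T T') : ‖T‖ ≤ ‖T'‖ := by
  refine T.opNorm_le_bound (norm_nonneg T') fun x => ?_
  rcases (norm_nonneg (T x)).eq_or_lt with h0 | h0
  · rw [← h0]
    positivity
  · refine le_of_mul_le_mul_right ?_ h0
    calc ‖T x‖ * ‖T x‖ = ‖⟪x, T' (T x)⟫‖ := by rw [← sq, norm_sq_eq (A := A), h.2]
      _ ≤ ‖x‖ * (‖T'‖ * ‖T x‖) := norm_inner_le.trans (by gcongr; exact T'.le_opNorm _)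
      _ = ‖T'‖ * ‖x‖ * ‖T x‖ := by ring

end IsAdjointableWith

lemma isAdjointableWith_rankOne [StarOrderedRing A] (x y : E) :
    IsAdjointableWith (A := A) (rankOne A x y) (rankOne A y x) :=
  isAdjointableWith_of_inner fun z w => by
    rw [rankOne_apply, rankOne_apply, inner_op_smul_left, inner_op_smul_right, star_inner]

end Adjointable

lemma isCompactOperator_of_forall_mem {𝕜 X Y : Type*} [NontriviallyNormedField 𝕜]
    [LocallyCompactSpace 𝕜] [NormedAddCommGroup X] [NormedSpace 𝕜 X] [NormedAddCommGroup Y]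
    [NormedSpace 𝕜 Y] (T : X →L[𝕜] Y) (V : Submodule 𝕜 Y) [FiniteDimensional 𝕜 V]
    (hT : ∀ x, T x ∈ V) : IsCompactOperator T :=
  have := FiniteDimensional.proper 𝕜 V
  (isCompactOperator_of_locallyCompactSpace_dom (T.codRestrict V hT)).clm_comp V.subtypeL

lemma IsCompactOperator.isUnit_smul_one_sub {X : Type*} [NormedAddCommGroup X]
    [NormedSpace ℂ X] [CompleteSpace X] {K : X →L[ℂ] X} (hK : IsCompactOperator K) {c : ℂ}
    (hc : c ≠ 0) (hinj : Function.Injective (c • (1 : X →L[ℂ] X) - K)) :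
    IsUnit (c • (1 : X →L[ℂ] X) - K) := by
  rcases hK.hasEigenvalue_or_mem_resolventSet hc with hev | hres
  · obtain ⟨x, hx⟩ := hev.exists_hasEigenvector
    refine absurd (hinj ?_ : x = 0) hx.2
    rw [map_zero, sub_apply, smul_apply, one_apply_eq_self, sub_eq_zero]
    exact hx.apply_eq_smul.symm
  · simpa [Algebra.algebraMap_eq_smul_one] using spectrum.mem_resolventSet_iff.1 hres

section CompactOp

open CStarModule' Filter Topology

variable {A : Type*} [CStarAlgebra A] [PartialOrder A]
variable {E : Type*} [NormedAddCommGroup E] [NormedSpace ℂ E] [SMul Aᵐᵒᵖ E] [CStarModule' A E]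

local notation "⟪" x ", " y "⟫" => inner (𝕜 := A) x y

variable (A E) in
def rankOneOps : Set (E →L[ℂ] E) := {S | ∃ x y : E, ∀ z : E, S z = x <• ⟪y, z⟫}

lemma IsCompactOp.neg {K : E →L[ℂ] E} (hK : IsCompactOp (A := A) K) :
    IsCompactOp (A := A) (-K) :=
  map_mem_closure continuous_neg hK fun _ => neg_mem

lemma IsCompactOp.clm_comp {K S : E →L[ℂ] E} (hK : IsCompactOp (A := A) K)
    (hS : ∀ (a : A) (x : E), S (x <• a) = S x <• a) : IsCompactOp (A := A) (S ∘L K) := by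
  have hspan : (Submodule.span ℂ (rankOneOps A E)).map
      (ContinuousLinearMap.compL ℂ E E E S : (E →L[ℂ] E) →ₗ[ℂ] E →L[ℂ] E) ≤
      Submodule.span ℂ (rankOneOps A E) := by
    rw [Submodule.map_span, Submodule.span_le]
    rintro _ ⟨F, ⟨x, y, hF⟩, rfl⟩
    exact Submodule.subset_span ⟨S x, y, fun z => by simp [hF, hS]⟩
  exact map_mem_closure (ContinuousLinearMap.compL ℂ E E E S).continuous hK
    fun F hF => hspan ⟨F, hF, rfl⟩

lemma IsCompactOp.isCompactOperator [CompleteSpace E] [FiniteDimensional ℂ A] {K : E →L[ℂ] E}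
    (hK : IsCompactOp (A := A) K) : IsCompactOperator K := by
  refine closure_minimal (s := (Submodule.span ℂ (rankOneOps A E) : Set (E →L[ℂ] E)))
    (t := compactOperator (RingHom.id ℂ) E E) ?_ isClosed_setOfPred_isCompactOperator hK
  refine Submodule.span_le.2 fun S ⟨x, y, hS⟩ =>
    isCompactOperator_of_forall_mem S (LinearMap.range (rightSMulₗ (A := A) x)) fun z => ?_
  rw [hS z]
  exact LinearMap.mem_range_self _ _

variable [StarOrderedRing A]

lemma exists_adjoint_mem_span_rankOneOps {F : E →L[ℂ] E}
    (hF : F ∈ Submodule.span ℂ (rankOneOps A E)) :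
    ∃ F' ∈ Submodule.span ℂ (rankOneOps A E), IsAdjointableWith (A := A) F F' := by
  induction hF using Submodule.span_induction with
  | mem S hS =>
    obtain ⟨x, y, hS⟩ := hS
    obtain rfl : S = rankOne A x y := ContinuousLinearMap.ext hS
    exact ⟨rankOne A y x, Submodule.subset_span ⟨y, x, fun _ => rfl⟩, isAdjointableWith_rankOne x y⟩
  | zero => exact ⟨0, Submodule.zero_mem _, isAdjointableWith_of_inner fun x y => by
      rw [zero_apply, zero_apply, CStarModule'.inner_zero_left, CStarModule'.inner_zero_right]⟩
  | add S T _ _ hS hT =>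
    obtain ⟨S', hS', hSS'⟩ := hS
    obtain ⟨T', hT', hTT'⟩ := hT
    exact ⟨S' + T', Submodule.add_mem _ hS' hT', hSS'.add hTT'⟩
  | smul c S _ hS =>
    obtain ⟨S', hS', hSS'⟩ := hS
    exact ⟨star c • S', Submodule.smul_mem _ _ hS', hSS'.smul c⟩

lemma IsCompactOp.exists_adjoint [CompleteSpace E] {K : E →L[ℂ] E}
    (hK : IsCompactOp (A := A) K) :
    ∃ K', IsCompactOp (A := A) K' ∧ IsAdjointableWith (A := A) K K' := by
  obtain ⟨F, hF, hFK⟩ := mem_closure_iff_seq_limit.1 hK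
  choose F' hF' hFF' using fun n => exists_adjoint_mem_span_rankOneOps (hF n)
  have hcauchy : CauchySeq F' := by
    refine Metric.cauchySeq_iff.2 fun ε hε => ?_
    obtain ⟨N, hN⟩ := Metric.cauchySeq_iff.1 hFK.cauchySeq ε hε
    refine ⟨N, fun m hm n hn => lt_of_le_of_lt ?_ (hN m hm n hn)⟩
    rw [dist_eq_norm, dist_eq_norm]
    exact ((hFF' m).sub (hFF' n)).symm.norm_le
  obtain ⟨K', hF'K'⟩ := cauchySeq_tendsto_of_complete hcauchy
  refine ⟨K', mem_closure_of_tendsto hF'K' (.of_forall hF'),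
    isAdjointableWith_of_inner fun x y => ?_⟩
  have hlim {G : ℕ → E →L[ℂ] E} {T : E →L[ℂ] E} (hG : Tendsto G atTop (𝓝 T)) (x : E) :
      Tendsto (fun n => G n x) atTop (𝓝 (T x)) :=
    ((ContinuousLinearMap.apply ℂ E x).continuous.tendsto T).comp hG
  have hinner {f g : ℕ → E} {a b : E} (hf : Tendsto f atTop (𝓝 a))
      (hg : Tendsto g atTop (𝓝 b)) : Tendsto (fun n => ⟪f n, g n⟫) atTop (𝓝 ⟪a, b⟫) :=
    (CStarModule'.continuous_inner.tendsto (a, b)).comp (hf.prodMk_nhds hg)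
  refine tendsto_nhds_unique (hinner (hlim hFK x) tendsto_const_nhds) ?_
  simpa only [(hFF' _).2] using hinner tendsto_const_nhds (hlim hF'K' y)

end CompactOp

section RightSpan

variable {A E : Type*} [NormedAddCommGroup E] [NormedSpace ℂ E] [SMul Aᵐᵒᵖ E]

variable (A) in
def rightSpan (s : Set E) : Submodule ℂ E :=
  Submodule.span ℂ {y | ∃ x ∈ s, ∃ a : A, y = x <• a}

lemma rightSpan_mono {s t : Set E} (h : s ⊆ t) : rightSpan A s ≤ rightSpan A t :=
  Submodule.span_mono fun _ ⟨x, hx, a, hy⟩ => ⟨x, h hx, a, hy⟩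

lemma isFinGen_of_forall_mem_rightSpan (s : Finset E)
    (hs : ∀ x : E, x ∈ rightSpan A (s : Set E)) : IsFinGen (A := A) (E := E) := by
  refine ⟨s.card, fun i => s.equivFin.symm i, fun x => Submodule.span_mono ?_ (hs x)⟩
  rintro _ ⟨x, hx, a, rfl⟩
  exact ⟨s.equivFin ⟨x, hx⟩, a, by simp⟩

end RightSpan

section FiniteGeneration

variable {A : Type*} [CStarAlgebra A] [PartialOrder A]
variable {E : Type*} [NormedAddCommGroup E] [NormedSpace ℂ E] [SMul Aᵐᵒᵖ E] [CStarModule' A E]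

lemma exists_finset_forall_apply_mem_rightSpan {F : E →L[ℂ] E}
    (hF : F ∈ Submodule.span ℂ (rankOneOps A E)) :
    ∃ s : Finset E, ∀ z : E, F z ∈ rightSpan A (s : Set E) := by
  classical
  induction hF using Submodule.span_induction with
  | mem S hS =>
    obtain ⟨x, y, hS⟩ := hS
    exact ⟨{x}, fun z => Submodule.subset_span ⟨x, by simp, _, hS z⟩⟩
  | zero => exact ⟨∅, fun _ => Submodule.zero_mem _⟩
  | add S T _ _ hS hT =>
    obtain ⟨s, hs⟩ := hS
    obtain ⟨t, ht⟩ := hT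
    refine ⟨s ∪ t, fun z => Submodule.add_mem _ ?_ ?_⟩
    · exact rightSpan_mono (by simp) (hs z)
    · exact rightSpan_mono (by simp) (ht z)
  | smul c S _ hS =>
    obtain ⟨s, hs⟩ := hS
    exact ⟨s, fun z => Submodule.smul_mem _ c (hs z)⟩

variable [CompleteSpace E]

lemma isFinGen_of_isCompactOp_one (h : IsCompactOp (A := A) (1 : E →L[ℂ] E)) :
    IsFinGen (A := A) (E := E) := by
  obtain ⟨F, hFunit, hF⟩ := mem_closure_iff_nhds.1 h _ (Units.isOpen.mem_nhds isUnit_one)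
  obtain ⟨s, hs⟩ := exists_finset_forall_apply_mem_rightSpan hF
  refine isFinGen_of_forall_mem_rightSpan s fun x => ?_
  obtain ⟨z, rfl⟩ := (ContinuousLinearMap.isUnit_iff_bijective.1 hFunit).2 x
  exact hs z

lemma IsCompactOp.isFinGen_of_invertibleInL {K : E →L[ℂ] E} (hK : IsCompactOp (A := A) K)
    (hinv : InvertibleInL (A := A) K) : IsFinGen (A := A) (E := E) := by
  obtain ⟨S, S', hS, hSK, -⟩ := hinv
  exact isFinGen_of_isCompactOp_one (hSK ▸ hK.clm_comp hS.1)

variable [StarOrderedRing A]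

lemma IsCompactOp.invertibleInL_smul_one_sub [FiniteDimensional ℂ A] {K : E →L[ℂ] E}
    (hK : IsCompactOp (A := A) K) {c : ℂ} (hc : c ≠ 0)
    (hinj : Function.Injective (c • (1 : E →L[ℂ] E) - K)) :
    InvertibleInL (A := A) (c • (1 : E →L[ℂ] E) - K) := by
  obtain ⟨K', hK'c, hKK'⟩ := hK.exists_adjoint
  have hadj := hKK'.smul_one_sub c
  have hunit := hK.isCompactOperator.isUnit_smul_one_sub hc hinj
  have hunit' := hK'c.isCompactOperator.isUnit_smul_one_sub (star_ne_zero.2 hc)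
    (hadj.injective_of_surjective (ContinuousLinearMap.isUnit_iff_bijective.1 hunit).2)
  exact hadj.invertibleInL hunit hunit'

end FiniteGeneration

section

variable {A : Type*} [CStarAlgebra A] [PartialOrder A] [StarOrderedRing A]
variable {E : Type*} [NormedAddCommGroup E] [NormedSpace ℂ E] [SMul Aᵐᵒᵖ E]
  [CStarModule' A E] [CompleteSpace E]

/-- Over a finite dimensional C*-algebra: (1) if `E` is not finitely generated, then
`0 ∈ σ(K)` for every compact operator `K`; (2) every nonzero `λ ∈ σ(K)` is an eigenvalue
of `K`. -/
theorem stmt18 [FiniteDimensional ℂ A] (K : E →L[ℂ] E) (hK : IsCompactOp (A := A) K) :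
    (¬ IsFinGen (A := A) (E := E) →
      ¬ InvertibleInL (A := A) ((0 : ℂ) • (1 : E →L[ℂ] E) - K)) ∧
    (∀ lam : ℂ, lam ≠ 0 → ¬ InvertibleInL (A := A) (lam • (1 : E →L[ℂ] E) - K) →
      ∃ x : E, x ≠ 0 ∧ lam • x - K x = 0) := by
  refine ⟨fun hfin hinv => hfin ?_, fun lam hlam hninv => ?_⟩
  · rw [zero_smul, zero_sub] at hinv
    exact hK.neg.isFinGen_of_invertibleInL hinv
  · by_contra! heig
    exact hninv (hK.invertibleInL_smul_one_sub hlam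
      ((injective_iff_map_eq_zero _).2 fun x => not_imp_not.1 (heig x)))

end
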